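/- Suppose for every z ∈ Z the loss F(·, z) is convex, L-Lipschitz, and β-smooth, and run SGD with constant step size 0 < α ≤ 2/β on the neighbouring datasets S and S'. Then for every T ≥ k + 1, the expected averaged parameter distance satisfies the one-step recursion E_I[δ̄_T] ≤ E_I[δ̄_{T−1}] + 2αL/n, where δ̄_t(I) = (1/k) Σ_{i=t−k+1}^t ‖w_i(I) − w_i'(I)‖. -/

import Mathlib

open scoped RealInnerProductSpace

section aux
variable {E : Type*} [NormedAddCommGroup E] [InnerProductSpace ℝ E]
variable {f : E → ℝ} {g : E → E}

theorem sewa_lineDeriv (hd : ∀ x, HasFDerivAt f ((innerSL ℝ) (g x)) x)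
    (x d : E) (s : ℝ) :
    HasDerivAt (fun s : ℝ => f (x + s • d)) ⟪g (x + s • d), d⟫ s := by
  have h1 : HasDerivAt (fun s : ℝ => x + s • d) d s := by
    simpa using ((hasDerivAt_id s).smul_const d).const_add x
  have h := (hd (x + s • d)).comp_hasDerivAt s h1
  simp at h
  exact h

theorem sewa_grad_ineq (hd : ∀ x, HasFDerivAt f ((innerSL ℝ) (g x)) x)
    (hconv : ConvexOn ℝ Set.univ f) (x y : E) :
    f x + ⟪g x, y - x⟫ ≤ f y := by
  set ψ : ℝ → ℝ := fun s => f (x + s • (y - x)) with hψ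
  have hψconv : ConvexOn ℝ Set.univ ψ := by
    have := hconv.comp_affineMap (AffineMap.lineMap x y : ℝ →ᵃ[ℝ] E)
    have heq : ψ = f ∘ (AffineMap.lineMap x y : ℝ →ᵃ[ℝ] E) := by
      funext s
      simp only [ψ, Function.comp, AffineMap.lineMap_apply, vsub_eq_sub, vadd_eq_add]
      rw [add_comm]
    rw [heq]
    simpa using this
  have hder : HasDerivAt ψ ⟪g x, y - x⟫ 0 := by
    simpa using sewa_lineDeriv hd x (y - x) 0
  have := hψconv.le_slope_of_hasDerivAt (Set.mem_univ (0:ℝ)) (Set.mem_univ 1)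
    one_pos hder
  have h01 : ψ 0 = f x := by simp [ψ]
  have h11 : ψ 1 = f y := by
    have h : x + (1:ℝ) • (y - x) = y := by
      rw [one_smul]; abel
    simp only [ψ, h]
  rw [slope_def_field, h01, h11] at this
  simp only [sub_zero, div_one] at this
  linarith

theorem sewa_convex_of_monotone (hd : ∀ x, HasFDerivAt f ((innerSL ℝ) (g x)) x)
    (hmono : ∀ u v : E, 0 ≤ ⟪g u - g v, u - v⟫) :
    ConvexOn ℝ Set.univ f := by
  refine ⟨convex_univ, fun x _ y _ a b ha hb hab => ?_⟩
  set ψ : ℝ → ℝ := fun s => f (x + s • (y - x)) with hψdef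
  have hder : ∀ s : ℝ, HasDerivAt ψ ⟪g (x + s • (y - x)), y - x⟫ s :=
    fun s => sewa_lineDeriv hd x (y - x) s
  have hdiffψ : Differentiable ℝ ψ := fun s => (hder s).differentiableAt
  have hderiv : ∀ s, deriv ψ s = ⟪g (x + s • (y - x)), y - x⟫ :=
    fun s => (hder s).deriv
  have hmonoψ : Monotone (deriv ψ) := by
    intro s t hst
    rw [hderiv, hderiv]
    rcases eq_or_lt_of_le hst with rfl | hlt
    · exact le_rfl
    set u := x + t • (y - x)
    set v := x + s • (y - x)
    have huv : u - v = (t - s) • (y - x) := by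
      simp only [u, v]
      module
    have := hmono u v
    rw [huv, real_inner_smul_right] at this
    have h2 : 0 ≤ ⟪g u - g v, y - x⟫ := by
      by_contra hc
      push_neg at hc
      nlinarith
    rw [inner_sub_left] at h2
    linarith
  have hψconv : ConvexOn ℝ Set.univ ψ := hmonoψ.convexOn_univ_of_deriv hdiffψ
  have key := hψconv.2 (Set.mem_univ (0:ℝ)) (Set.mem_univ (1:ℝ)) ha hb hab
  have e0 : ψ 0 = f x := by simp [ψ]
  have e1 : ψ 1 = f y := by
    have h : x + (1:ℝ) • (y - x) = y := by rw [one_smul]; abel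
    simp only [ψ, h]
  have eb : ψ (a • (0:ℝ) + b • 1) = f (a • x + b • y) := by
    have h : x + (a • (0:ℝ) + b • 1) • (y - x) = a • x + b • y := by
      have ha1 : a = 1 - b := by linarith
      subst ha1
      simp only [smul_eq_mul, mul_zero, mul_one, zero_add, smul_sub]
      module
    simp only [ψ, h]
  rw [e0, e1, eb] at key
  exact key

theorem sewa_normsq_deriv (u : E) :
    HasFDerivAt (fun u : E => ‖u‖ ^ 2) ((innerSL ℝ) ((2:ℝ) • u)) u := by
  have h := (hasFDerivAt_id u).inner ℝ (hasFDerivAt_id u)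
  have hfun : (fun t : E => ⟪t, t⟫) = fun t : E => ‖t‖ ^ 2 := by
    funext t; exact real_inner_self_eq_norm_sq t
  simp only [id_eq] at h
  rw [hfun] at h
  refine h.congr_fderiv ?_
  ext v
  simp only [innerSL_apply_apply, ContinuousLinearMap.coe_comp', Function.comp_apply,
    ContinuousLinearMap.prod_apply, ContinuousLinearMap.coe_id', id_eq,
    fderivInnerCLM_apply, real_inner_smul_left]
  rw [real_inner_comm]
  ring

theorem sewa_descent {β : ℝ} (hd : ∀ x, HasFDerivAt f ((innerSL ℝ) (g x)) x)
    (hs : ∀ u v : E, ‖g u - g v‖ ≤ β * ‖u - v‖) (hβ : 0 < β) (x y : E) :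
    f y ≤ f x + ⟪g x, y - x⟫ + β / 2 * ‖y - x‖ ^ 2 := by
  set φ : E → ℝ := fun u => β / 2 * ‖u‖ ^ 2 - f u with hφdef
  set G : E → E := fun u => β • u - g u with hGdef
  have hdφ : ∀ u, HasFDerivAt φ ((innerSL ℝ) (G u)) u := by
    intro u
    have h1 := ((sewa_normsq_deriv u).const_mul (β / 2)).sub (hd u)
    have hCLM : (β / 2) • ((innerSL ℝ) ((2:ℝ) • u)) - (innerSL ℝ) (g u)
        = (innerSL ℝ) (G u) := by
      ext v
      simp only [ContinuousLinearMap.coe_sub', Pi.sub_apply,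
        ContinuousLinearMap.coe_smul', Pi.smul_apply, innerSL_apply_apply,
        real_inner_smul_left, inner_sub_left, smul_eq_mul, hGdef]
      ring
    rw [← hCLM]
    exact h1
  have hmono : ∀ u v : E, 0 ≤ ⟪G u - G v, u - v⟫ := by
    intro u v
    have hid : G u - G v = β • (u - v) - (g u - g v) := by
      simp only [hGdef]; module
    rw [hid, inner_sub_left, real_inner_smul_left, real_inner_self_eq_norm_sq]
    have h2 : ⟪g u - g v, u - v⟫ ≤ ‖g u - g v‖ * ‖u - v‖ := real_inner_le_norm _ _
    have h3 := hs u v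
    nlinarith [norm_nonneg (u - v), norm_nonneg (g u - g v)]
  have hφconv := sewa_convex_of_monotone hdφ hmono
  have hkey := sewa_grad_ineq hdφ hφconv x y
  simp only [hφdef, hGdef] at hkey
  rw [inner_sub_left, real_inner_smul_left] at hkey
  have e1 : ‖y - x‖ ^ 2 = ‖y‖ ^ 2 - 2 * ⟪y, x⟫ + ‖x‖ ^ 2 := norm_sub_sq_real y x
  have e2 : ⟪x, y - x⟫ = ⟪y, x⟫ - ‖x‖ ^ 2 := by
    rw [inner_sub_right, real_inner_self_eq_norm_sq, real_inner_comm]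
  rw [e2] at hkey
  rw [e1]
  linarith

theorem sewa_lower {β : ℝ} (hd : ∀ x, HasFDerivAt f ((innerSL ℝ) (g x)) x)
    (hconv : ConvexOn ℝ Set.univ f)
    (hs : ∀ u v : E, ‖g u - g v‖ ≤ β * ‖u - v‖) (hβ : 0 < β) (x y : E) :
    f x + ⟪g x, y - x⟫ + 1 / (2 * β) * ‖g y - g x‖ ^ 2 ≤ f y := by
  set h : E → ℝ := fun u => f u - ⟪g x, u⟫ with hhdef
  set G : E → E := fun u => g u - g x with hGdef
  have hdh : ∀ u, HasFDerivAt h ((innerSL ℝ) (G u)) u := by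
    intro u
    have h1 := (hd u).sub ((innerSL ℝ) (g x)).hasFDerivAt
    have hCLM : (innerSL ℝ) (g u) - (innerSL ℝ) (g x) = (innerSL ℝ) (G u) := by
      simp [hGdef, map_sub]
    rw [← hCLM]
    exact h1
  have hsh : ∀ u v : E, ‖G u - G v‖ ≤ β * ‖u - v‖ := by
    intro u v
    simpa [hGdef, sub_sub_sub_cancel_right] using hs u v
  set p : E := y - (1 / β) • G y with hpdef
  have hdesc := sewa_descent hdh hsh hβ y p
  have hmin := sewa_grad_ineq hd hconv x p
  have e1 : p - y = -((1 / β) • G y) := by simp [hpdef]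
  have e2 : ⟪G y, p - y⟫ = -(1 / β * ‖G y‖ ^ 2) := by
    rw [e1, inner_neg_right, real_inner_smul_right, real_inner_self_eq_norm_sq]
  have e3 : ‖p - y‖ ^ 2 = (1 / β) ^ 2 * ‖G y‖ ^ 2 := by
    rw [e1, norm_neg, norm_smul, mul_pow]
    congr 1
    rw [Real.norm_eq_abs, sq_abs]
  rw [e2, e3] at hdesc
  -- hdesc : h p ≤ h y - (1/β)‖Gy‖² + β/2 * (1/β)² ‖Gy‖²
  -- hmin : f x + ⟪g x, p - x⟫ ≤ f p
  have hx : h x ≤ h p := by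
    simp only [hhdef]
    have : ⟪g x, p⟫ - ⟪g x, x⟫ = ⟪g x, p - x⟫ := (inner_sub_right _ _ _).symm
    linarith [hmin, this.ge, this.le]
  have harith : -(1 / β * ‖G y‖ ^ 2) + β / 2 * ((1 / β) ^ 2 * ‖G y‖ ^ 2)
      = -(1 / (2 * β) * ‖G y‖ ^ 2) := by
    field_simp
    ring
  have hy : h x ≤ h y - 1 / (2 * β) * ‖G y‖ ^ 2 := by
    have := hx.trans hdesc
    linarith [harith]
  simp only [hhdef, hGdef] at hy ⊢
  have e4 : ⟪g x, y - x⟫ = ⟪g x, y⟫ - ⟪g x, x⟫ := inner_sub_right _ _ _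
  linarith

theorem sewa_coco {β : ℝ} (hd : ∀ x, HasFDerivAt f ((innerSL ℝ) (g x)) x)
    (hconv : ConvexOn ℝ Set.univ f)
    (hs : ∀ u v : E, ‖g u - g v‖ ≤ β * ‖u - v‖) (hβ : 0 < β) (u v : E) :
    1 / β * ‖g u - g v‖ ^ 2 ≤ ⟪g u - g v, u - v⟫ := by
  have h1 := sewa_lower hd hconv hs hβ u v
  have h2 := sewa_lower hd hconv hs hβ v u
  have e1 : ⟪g u - g v, u - v⟫ = ⟪g u, u - v⟫ - ⟪g v, u - v⟫ := inner_sub_left _ _ _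
  have e2 : ⟪g u, v - u⟫ = -⟪g u, u - v⟫ := by
    rw [← inner_neg_right]; congr 1; abel
  have e3 : ‖g v - g u‖ = ‖g u - g v‖ := norm_sub_rev _ _
  rw [e2, e3] at h1
  have harith : 1 / (2 * β) * ‖g u - g v‖ ^ 2 + 1 / (2 * β) * ‖g u - g v‖ ^ 2
      = 1 / β * ‖g u - g v‖ ^ 2 := by
    field_simp
    ring
  linarith

theorem sewa_nonexp {β α : ℝ} (hd : ∀ x, HasFDerivAt f ((innerSL ℝ) (g x)) x)
    (hconv : ConvexOn ℝ Set.univ f)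
    (hs : ∀ u v : E, ‖g u - g v‖ ≤ β * ‖u - v‖) (hβ : 0 < β)
    (hα : 0 < α) (hα2 : α ≤ 2 / β) (u v : E) :
    ‖(u - α • g u) - (v - α • g v)‖ ≤ ‖u - v‖ := by
  have hco := sewa_coco hd hconv hs hβ u v
  have hid : (u - α • g u) - (v - α • g v) = (u - v) - α • (g u - g v) := by module
  have key : ‖(u - α • g u) - (v - α • g v)‖ ^ 2 ≤ ‖u - v‖ ^ 2 := by
    rw [hid, norm_sub_sq_real, real_inner_smul_right, norm_smul, mul_pow,
      Real.norm_eq_abs, sq_abs]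
    have hcomm : ⟪u - v, g u - g v⟫ = ⟪g u - g v, u - v⟫ := real_inner_comm _ _
    rw [hcomm]
    have h1 : 2 * α * (1 / β * ‖g u - g v‖ ^ 2) ≤ 2 * α * ⟪g u - g v, u - v⟫ :=
      mul_le_mul_of_nonneg_left hco (by positivity)
    have h2 : α * (α * ‖g u - g v‖ ^ 2) ≤ (2 / β) * (α * ‖g u - g v‖ ^ 2) :=
      mul_le_mul_of_nonneg_right hα2 (by positivity)
    have h3 : (2:ℝ) / β = 2 * (1 / β) := by ring
    rw [h3] at h2
    nlinarith [h1, h2]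
  nlinarith [key, norm_nonneg ((u - α • g u) - (v - α • g v)), norm_nonneg (u - v)]

theorem sewa_gradbound {L : ℝ} (hd : ∀ x, HasFDerivAt f ((innerSL ℝ) (g x)) x)
    (hL : 0 < L) (hLip : ∀ u v : E, |f u - f v| ≤ L * ‖u - v‖) (x : E) :
    ‖g x‖ ≤ L := by
  have hlip : LipschitzWith L.toNNReal f := by
    apply LipschitzWith.of_dist_le_mul
    intro u v
    rw [Real.dist_eq, dist_eq_norm]
    calc |f u - f v| ≤ L * ‖u - v‖ := hLip u v
      _ = (L.toNNReal : ℝ) * ‖u - v‖ := by rw [Real.coe_toNNReal _ hL.le]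
  have := (hd x).le_of_lipschitz hlip
  rwa [innerSL_apply_norm, Real.coe_toNNReal _ hL.le] at this

theorem sewa_count {N M : ℕ} (t0 : Fin M) (φ : Fin N → ℝ) :
    ∑ I : Fin M → Fin N, φ (I t0) = (N : ℝ) ^ (M - 1) * ∑ x : Fin N, φ x := by
  classical
  have h := Fintype.sum_equiv (Equiv.funSplitAt t0 (Fin N))
    (fun I => φ (I t0)) (fun p => φ p.1) (fun I => rfl)
  rw [h, Fintype.sum_prod_type]
  simp only [Finset.sum_const, Finset.card_univ, nsmul_eq_mul]
  have hcard : Fintype.card ({ j // j ≠ t0 } → Fin N) = N ^ (M - 1) := by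
    rw [Fintype.card_fun, Fintype.card_fin]
    congr 1
    have : Fintype.card { j : Fin M // j ≠ t0 } = Fintype.card (Fin M) - 1 := by
      rw [Fintype.card_subtype_compl, Fintype.card_subtype_eq]
    rw [this, Fintype.card_fin]
  rw [hcard, ← Finset.mul_sum]
  push_cast
  ring

end aux


/-- **One-step recursion in the proof of Theorem 4.2 (convex case).** For SGD with constant
step size `0 < α ≤ 2/β` on neighbouring datasets, for every `T ≥ k + 1` the expected averaged
parameter distance satisfies `E_I[δ̄_T] ≤ E_I[δ̄_{T-1}] + 2αL/n`, where
`δ̄_t(I) = (1/k) ∑_{i=t-k+1}^t ‖w_i(I) - w_i'(I)‖`. -/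
theorem sewa_convex_recursion
    {E : Type*} [NormedAddCommGroup E] [InnerProductSpace ℝ E]
    {Z : Type*} (F : E → Z → ℝ) (gradF : E → Z → E)
    (L β : ℝ) (hL : 0 < L) (hβ : 0 < β)
    (hdiff : ∀ (z : Z) (x : E), HasFDerivAt (fun u => F u z) ((innerSL ℝ) (gradF x z)) x)
    (hconv : ∀ z : Z, ConvexOn ℝ Set.univ (fun u => F u z))
    (hLip : ∀ (z : Z) (u v : E), |F u z - F v z| ≤ L * ‖u - v‖)
    (hsmooth : ∀ (z : Z) (u v : E), ‖gradF u z - gradF v z‖ ≤ β * ‖u - v‖)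
    (n : ℕ) (hn : 2 ≤ n) (S S' : Fin n → Z) (j : Fin n)
    (hSS' : ∀ i, i ≠ j → S i = S' i)
    (T k : ℕ) (hk : 1 ≤ k) (hkT : k + 1 ≤ T)
    (α : ℝ) (hα : 0 < α) (hα2 : α ≤ 2 / β)
    (w0 : E) (w w' : (Fin (T + 1) → Fin n) → ℕ → E)
    (hw1 : ∀ I, w I 1 = w0) (hw1' : ∀ I, w' I 1 = w0)
    (hwrec : ∀ I, ∀ t, ∀ (h2 : 2 ≤ t) (hT' : t ≤ T),
      w I t = w I (t - 1) - α • gradF (w I (t - 1)) (S (I ⟨t, by omega⟩)))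
    (hwrec' : ∀ I, ∀ t, ∀ (h2 : 2 ≤ t) (hT' : t ≤ T),
      w' I t = w' I (t - 1) - α • gradF (w' I (t - 1)) (S' (I ⟨t, by omega⟩))) :
    ((1 : ℝ) / (n : ℝ) ^ (T + 1)) *
      ∑ I : Fin (T + 1) → Fin n,
        ((1 : ℝ) / k) * ∑ i : Fin k, ‖w I (T - k + 1 + i) - w' I (T - k + 1 + i)‖
      ≤ ((1 : ℝ) / (n : ℝ) ^ (T + 1)) *
          (∑ I : Fin (T + 1) → Fin n,
            ((1 : ℝ) / k) * ∑ i : Fin k, ‖w I (T - 1 - k + 1 + i) - w' I (T - 1 - k + 1 + i)‖)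
        + 2 * α * L / n := by
  classical
  have hn0 : (0:ℝ) < (n:ℝ) := by
    have : 0 < n := by omega
    exact_mod_cast this
  have hk0 : (0:ℝ) < (k:ℝ) := by
    have : 0 < k := by omega
    exact_mod_cast this
  -- one-step estimate
  have step : ∀ t : ℕ, 2 ≤ t → t ≤ T →
      (∑ I : Fin (T + 1) → Fin n, ‖w I t - w' I t‖)
        ≤ (∑ I : Fin (T + 1) → Fin n, ‖w I (t - 1) - w' I (t - 1)‖)
          + 2 * α * L * (n : ℝ) ^ T := by
    intro t h2 hT'
    have ht : t < T + 1 := by omega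
    have hpt : ∀ I : Fin (T + 1) → Fin n,
        ‖w I t - w' I t‖ ≤ ‖w I (t - 1) - w' I (t - 1)‖
          + (if I ⟨t, ht⟩ = j then 2 * α * L else 0) := by
      intro I
      have hrec1 : w I t
          = w I (t - 1) - α • gradF (w I (t - 1)) (S (I ⟨t, ht⟩)) := hwrec I t h2 hT'
      have hrec2 : w' I t
          = w' I (t - 1) - α • gradF (w' I (t - 1)) (S' (I ⟨t, ht⟩)) := hwrec' I t h2 hT'
      rw [hrec1, hrec2]
      set u := w I (t - 1)
      set v := w' I (t - 1)
      by_cases hj : I ⟨t, ht⟩ = j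
      · rw [if_pos hj]
        have hgu := sewa_gradbound (hdiff (S (I ⟨t, ht⟩))) hL (hLip (S (I ⟨t, ht⟩))) u
        have hgv := sewa_gradbound (hdiff (S' (I ⟨t, ht⟩))) hL (hLip (S' (I ⟨t, ht⟩))) v
        have htri : ‖(u - α • gradF u (S (I ⟨t, ht⟩))) - (v - α • gradF v (S' (I ⟨t, ht⟩)))‖
            ≤ ‖u - v‖ + (‖α • gradF u (S (I ⟨t, ht⟩))‖ + ‖α • gradF v (S' (I ⟨t, ht⟩))‖) := by
          have hid : (u - α • gradF u (S (I ⟨t, ht⟩))) - (v - α • gradF v (S' (I ⟨t, ht⟩)))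
              = (u - v) + (α • gradF v (S' (I ⟨t, ht⟩)) - α • gradF u (S (I ⟨t, ht⟩))) := by
            abel
          rw [hid]
          calc ‖(u - v) + (α • gradF v (S' (I ⟨t, ht⟩)) - α • gradF u (S (I ⟨t, ht⟩)))‖
              ≤ ‖u - v‖ + ‖α • gradF v (S' (I ⟨t, ht⟩)) - α • gradF u (S (I ⟨t, ht⟩))‖ :=
                norm_add_le _ _
            _ ≤ ‖u - v‖ + (‖α • gradF v (S' (I ⟨t, ht⟩))‖ + ‖α • gradF u (S (I ⟨t, ht⟩))‖) := by
                linarith [norm_sub_le (α • gradF v (S' (I ⟨t, ht⟩))) (α • gradF u (S (I ⟨t, ht⟩)))]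
            _ = ‖u - v‖ + (‖α • gradF u (S (I ⟨t, ht⟩))‖ + ‖α • gradF v (S' (I ⟨t, ht⟩))‖) := by
                ring
        have hsm1 : ‖α • gradF u (S (I ⟨t, ht⟩))‖ ≤ α * L := by
          rw [norm_smul, Real.norm_eq_abs, abs_of_pos hα]
          exact mul_le_mul_of_nonneg_left hgu hα.le
        have hsm2 : ‖α • gradF v (S' (I ⟨t, ht⟩))‖ ≤ α * L := by
          rw [norm_smul, Real.norm_eq_abs, abs_of_pos hα]
          exact mul_le_mul_of_nonneg_left hgv hα.le
        calc ‖(u - α • gradF u (S (I ⟨t, ht⟩))) - (v - α • gradF v (S' (I ⟨t, ht⟩)))‖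
            ≤ ‖u - v‖ + (‖α • gradF u (S (I ⟨t, ht⟩))‖ + ‖α • gradF v (S' (I ⟨t, ht⟩))‖) := htri
          _ ≤ ‖u - v‖ + 2 * α * L := by linarith
      · rw [if_neg hj, add_zero, hSS' (I ⟨t, ht⟩) hj]
        exact sewa_nonexp (hdiff (S' (I ⟨t, ht⟩))) (hconv (S' (I ⟨t, ht⟩)))
          (hsmooth (S' (I ⟨t, ht⟩))) hβ hα hα2 u v
    calc (∑ I : Fin (T + 1) → Fin n, ‖w I t - w' I t‖)
        ≤ ∑ I : Fin (T + 1) → Fin n, (‖w I (t - 1) - w' I (t - 1)‖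
            + (if I ⟨t, ht⟩ = j then 2 * α * L else 0)) :=
          Finset.sum_le_sum fun I _ => hpt I
      _ = (∑ I : Fin (T + 1) → Fin n, ‖w I (t - 1) - w' I (t - 1)‖)
            + ∑ I : Fin (T + 1) → Fin n, (if I ⟨t, ht⟩ = j then 2 * α * L else 0) :=
          Finset.sum_add_distrib
      _ = (∑ I : Fin (T + 1) → Fin n, ‖w I (t - 1) - w' I (t - 1)‖)
            + 2 * α * L * (n : ℝ) ^ T := by
          congr 1
          rw [sewa_count (⟨t, ht⟩ : Fin (T + 1)) (fun x => if x = j then 2 * α * L else 0)]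
          rw [Finset.sum_ite_eq' Finset.univ j (fun _ => 2 * α * L)]
          simp only [Finset.mem_univ, if_pos, Nat.add_sub_cancel]
          ring
  -- window-wise estimate
  have key : ∀ i : Fin k,
      (∑ I : Fin (T + 1) → Fin n, ‖w I (T - k + 1 + i) - w' I (T - k + 1 + i)‖)
        ≤ (∑ I : Fin (T + 1) → Fin n, ‖w I (T - 1 - k + 1 + i) - w' I (T - 1 - k + 1 + i)‖)
          + 2 * α * L * (n : ℝ) ^ T := by
    intro i
    have hi := i.2
    have h1 : T - 1 - k + 1 + (i : ℕ) = (T - k + 1 + (i : ℕ)) - 1 := by omega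
    rw [h1]
    exact step (T - k + 1 + i) (by omega) (by omega)
  -- assemble
  have lhs_eq : (∑ I : Fin (T + 1) → Fin n,
        ((1 : ℝ) / k) * ∑ i : Fin k, ‖w I (T - k + 1 + i) - w' I (T - k + 1 + i)‖)
      = ((1 : ℝ) / k) * ∑ i : Fin k, ∑ I : Fin (T + 1) → Fin n,
          ‖w I (T - k + 1 + i) - w' I (T - k + 1 + i)‖ := by
    rw [← Finset.mul_sum, Finset.sum_comm]
  have rhs_eq : (∑ I : Fin (T + 1) → Fin n,
        ((1 : ℝ) / k) * ∑ i : Fin k, ‖w I (T - 1 - k + 1 + i) - w' I (T - 1 - k + 1 + i)‖)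
      = ((1 : ℝ) / k) * ∑ i : Fin k, ∑ I : Fin (T + 1) → Fin n,
          ‖w I (T - 1 - k + 1 + i) - w' I (T - 1 - k + 1 + i)‖ := by
    rw [← Finset.mul_sum, Finset.sum_comm]
  rw [lhs_eq, rhs_eq]
  set A : Fin k → ℝ := fun i => ∑ I : Fin (T + 1) → Fin n,
    ‖w I (T - k + 1 + i) - w' I (T - k + 1 + i)‖ with hA
  set B : Fin k → ℝ := fun i => ∑ I : Fin (T + 1) → Fin n,
    ‖w I (T - 1 - k + 1 + i) - w' I (T - 1 - k + 1 + i)‖ with hB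
  have hsum : (∑ i : Fin k, A i) ≤ (∑ i : Fin k, B i) + k * (2 * α * L * (n : ℝ) ^ T) := by
    calc (∑ i : Fin k, A i) ≤ ∑ i : Fin k, (B i + 2 * α * L * (n : ℝ) ^ T) :=
          Finset.sum_le_sum fun i _ => key i
      _ = (∑ i : Fin k, B i) + k * (2 * α * L * (n : ℝ) ^ T) := by
          rw [Finset.sum_add_distrib, Finset.sum_const, Finset.card_univ, Fintype.card_fin,
            nsmul_eq_mul]
  calc ((1 : ℝ) / (n : ℝ) ^ (T + 1)) * (((1 : ℝ) / k) * ∑ i : Fin k, A i)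
      ≤ ((1 : ℝ) / (n : ℝ) ^ (T + 1)) * (((1 : ℝ) / k)
          * ((∑ i : Fin k, B i) + k * (2 * α * L * (n : ℝ) ^ T))) := by
        apply mul_le_mul_of_nonneg_left _ (by positivity)
        exact mul_le_mul_of_nonneg_left hsum (by positivity)
    _ = ((1 : ℝ) / (n : ℝ) ^ (T + 1)) * (((1 : ℝ) / k) * ∑ i : Fin k, B i)
          + 2 * α * L / n := by
        rw [pow_succ]
        have hnT : ((n : ℝ)) ^ T ≠ 0 := by positivity
        field_simp
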